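/- arXiv:2510.03838 — 3 statements merged into one kernel-verified Lean document; each statement's English description precedes it below -/
import Mathlib

section
/- Let P_i and P_val be probability measures on a measurable space X such that P_i is absolutely continuous with respect to P_val with Radon–Nikodym derivative r(x) = dP_i/dP_val(x) satisfying |r(x) − 1| ≤ γ for all x, where 0 ≤ γ < 1. Then the Kullback–Leibler divergence satisfies D_KL(P_i ‖ P_val) = E_{x∼P_val}[r(x) log r(x)] ≤ γ²/(2(1−γ)) + γ³/(3(1−γ)²). -/
/-!
Since `r log r = klFun r + (r - 1)` and `∫ r ∂P_val = 1`, the divergence equals `∫ klFun r ∂P_val`.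
For `t ≥ c` with `0 < c ≤ 1` one has `klFun t ≤ (t - 1)² / (2c)`: the difference has derivative
`(t - 1)/c - log t`, which has the sign of `t - 1` there (as `1 - 1/t ≤ log t ≤ t - 1`), so it is
minimal at `t = 1`, where it vanishes. Taking `c = 1 - γ` bounds the integrand by `γ²/(2(1-γ))`.
-/

open MeasureTheory Real Set InformationTheory

lemma klFun_le_sq_div {c u : ℝ} (hc0 : 0 < c) (hc1 : c ≤ 1) (hcu : c ≤ u) :
    klFun u ≤ (u - 1) ^ 2 / (2 * c) := by
  set φ : ℝ → ℝ := fun t ↦ (t - 1) ^ 2 / (2 * c) - klFun t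
  have hφ' : ∀ t, 0 < t → HasDerivAt φ ((t - 1) / c - log t) t := fun t ht ↦
    (((((hasDerivAt_id t).sub_const 1).pow 2).div_const (2 * c)).sub
      (hasDerivAt_klFun ht.ne')).congr_deriv (by simp; ring)
  have hφ : Continuous φ := by
    have := continuous_klFun
    fun_prop
  suffices φ 1 ≤ φ u by simpa [φ, klFun_one, sub_nonneg] using this
  rcases le_total 1 u with h1u | hu1
  · refine monotoneOn_of_hasDerivWithinAt_nonneg (convex_Ici 1) hφ.continuousOn
      (fun t ht ↦ (hφ' t ?_).hasDerivWithinAt) (fun t ht ↦ ?_) self_mem_Ici h1u h1u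
    all_goals rw [interior_Ici, mem_Ioi] at ht
    · linarith
    · have : t - 1 ≤ (t - 1) / c := by
        rw [le_div_iff₀ hc0]; nlinarith
      linarith [log_le_sub_one_of_pos (zero_lt_one.trans ht)]
  · refine antitoneOn_of_hasDerivWithinAt_nonpos (convex_Icc c 1) hφ.continuousOn
      (fun t ht ↦ (hφ' t ?_).hasDerivWithinAt) (fun t ht ↦ ?_) ⟨hcu, hu1⟩ ⟨hc1, le_rfl⟩ hu1
    all_goals rw [interior_Icc] at ht
    · linarith [ht.1]
    · have ht0 : 0 < t := hc0.trans ht.1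
      have hlog : log t ≤ 0 := log_nonpos ht0.le ht.2.le
      have := klFun_nonneg ht0.le
      rw [klFun_apply] at this
      rw [sub_nonpos, div_le_iff₀ hc0]
      nlinarith [ht.1]

lemma klFun_le_of_abs_sub_one_le {γ u : ℝ} (hγ1 : γ < 1) (hu : |u - 1| ≤ γ) :
    klFun u ≤ γ ^ 2 / (2 * (1 - γ)) := by
  obtain ⟨hlo, -⟩ := abs_le.1 hu
  calc klFun u ≤ (u - 1) ^ 2 / (2 * (1 - γ)) :=
        klFun_le_sq_div (by linarith) (by linarith [(abs_nonneg _).trans hu]) (by linarith)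
    _ ≤ γ ^ 2 / (2 * (1 - γ)) := by
        gcongr ?_ / _
        rw [← sq_abs]
        exact pow_le_pow_left₀ (abs_nonneg _) hu 2

section Integral

variable {X : Type*} [MeasurableSpace X] {μ : Measure X} {f : X → ℝ}

lemma integral_eq_one_of_isProbabilityMeasure_withDensity (hf : AEStronglyMeasurable f μ)
    (hf0 : 0 ≤ᵐ[μ] f) [IsProbabilityMeasure (μ.withDensity fun x ↦ ENNReal.ofReal (f x))] :
    ∫ x, f x ∂μ = 1 := by
  have h := measure_univ (μ := μ.withDensity fun x ↦ ENNReal.ofReal (f x))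
  rw [withDensity_apply _ MeasurableSet.univ, Measure.restrict_univ] at h
  rw [integral_eq_lintegral_of_nonneg_ae hf0 hf, h, ENNReal.toReal_one]

lemma integral_mul_log_eq_integral_klFun [IsProbabilityMeasure μ] (hf : ∫ x, f x ∂μ = 1) :
    ∫ x, f x * log (f x) ∂μ = ∫ x, klFun (f x) ∂μ := by
  have hf_int : Integrable f μ := Integrable.of_integral_ne_zero (by simp [hf])
  have hlin : Integrable (fun x ↦ f x - 1) μ := hf_int.sub (integrable_const 1)
  have hsplit : (fun x ↦ f x * log (f x)) = fun x ↦ klFun (f x) + (f x - 1) := by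
    ext x; rw [klFun_apply]; ring
  rw [hsplit]
  by_cases hkl : Integrable (fun x ↦ klFun (f x)) μ
  · rw [integral_add hkl hlin, integral_sub hf_int (integrable_const 1), hf]
    simp
  · rw [integral_undef hkl, integral_undef]
    rwa [integrable_add_iff_integrable_left' hlin]

end Integral

/-- marginal KL bound.
If `P_i ≪ P_val` with Radon–Nikodym derivative `r` satisfying `|r(x) − 1| ≤ γ` for all `x`,
with `0 ≤ γ < 1`, then the Kullback–Leibler divergence
`D_KL(P_i ‖ P_val) = E_{x∼P_val}[r(x) log r(x)]` satisfies
`D_KL(P_i ‖ P_val) ≤ γ²/(2(1−γ)) + γ³/(3(1−γ)²)`. -/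
theorem klDiv_le_of_rnDeriv_close
    {X : Type*} [MeasurableSpace X]
    (Pi Pval : Measure X) [IsProbabilityMeasure Pi] [IsProbabilityMeasure Pval]
    (r : X → ℝ) (hr : Measurable r) (hr0 : ∀ x, 0 ≤ r x)
    (hPi : Pi = Pval.withDensity (fun x => ENNReal.ofReal (r x)))
    (γ : ℝ) (hγ0 : 0 ≤ γ) (hγ1 : γ < 1) (hrγ : ∀ x, |r x - 1| ≤ γ) :
    ∫ x, r x * Real.log (r x) ∂Pval ≤ γ ^ 2 / (2 * (1 - γ)) + γ ^ 3 / (3 * (1 - γ) ^ 2) := by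
  subst hPi
  have hr1 : ∫ x, r x ∂Pval = 1 :=
    integral_eq_one_of_isProbabilityMeasure_withDensity hr.aestronglyMeasurable (ae_of_all _ hr0)
  have hbound (x : X) : ‖klFun (r x)‖ ≤ γ ^ 2 / (2 * (1 - γ)) := by
    rw [Real.norm_of_nonneg (klFun_nonneg (hr0 x))]
    exact klFun_le_of_abs_sub_one_le hγ1 (hrγ x)
  calc ∫ x, r x * log (r x) ∂Pval = ∫ x, klFun (r x) ∂Pval :=
        integral_mul_log_eq_integral_klFun hr1
    _ ≤ γ ^ 2 / (2 * (1 - γ)) :=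
        (le_abs_self _).trans <| (norm_integral_le_of_norm_le_const (ae_of_all _ hbound)).trans
          (by simp)
    _ ≤ γ ^ 2 / (2 * (1 - γ)) + γ ^ 3 / (3 * (1 - γ) ^ 2) :=
        le_add_of_nonneg_right (by have := sub_pos.2 hγ1; positivity)
end

section
/- Let 𝓛 : ℝ^d → ℝ be L-smooth and bounded below by 𝓛⋆. On a probability space with filtration (𝓕_t), let θ^(0) be deterministic and define θ^(t+1) = θ^(t) − η (I + λ I_G^(t)) g_t, where λ ≥ 0, g_t is 𝓕_{t+1}-measurable with E[g_t | 𝓕_t] = ∇𝓛(θ^(t)) and E[‖g_t − ∇𝓛(θ^(t))‖² | 𝓕_t] ≤ σ², and I_G^(t) is an 𝓕_t-measurable symmetric positive semidefinite d×d matrix with ‖I_G^(t)‖_op ≤ G. If the step size satisfies 0 < η ≤ 1/(L(1+λG)²), then for every t, E[𝓛(θ^(t+1))] ≤ E[𝓛(θ^(t))] − η(1 − (Lη/2)(1+λG)²)·E[‖∇𝓛(θ^(t))‖²] + (Lη²/2)(1+λG)²σ². -/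
/-!
Along the step `θ' = θ - η (g + λ I_G g)` the descent inequality
`𝓛 θ' ≤ 𝓛 θ + ⟪∇𝓛 θ, θ' - θ⟫ + L/2 ‖θ' - θ‖²`, together with `‖g + λ I_G g‖ ≤ (1 + λG) ‖g‖`,
bounds `𝓛 θ'` by `𝓛 θ - η ⟪∇𝓛 θ, g⟫ - ηλ ⟪∇𝓛 θ, I_G g⟫ + (Lη²/2)(1 + λG)² ‖g‖²`.
In expectation, pulling the `ℱ_t`-measurable factors `∇𝓛 θ` and `I_G ∇𝓛 θ` out of the
conditional expectation of `g` gives `E⟪∇𝓛 θ, g⟫ = E‖∇𝓛 θ‖²`,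
`E⟪∇𝓛 θ, I_G g⟫ = E⟪I_G ∇𝓛 θ, ∇𝓛 θ⟫ ≥ 0` and `E‖g‖² = E‖g - ∇𝓛 θ‖² + E‖∇𝓛 θ‖² ≤ E‖∇𝓛 θ‖² + σ²`.
All these expectations are finite because every iterate is in `L²` (by induction from the
deterministic start), `∇𝓛` grows linearly and `𝓛` at most quadratically.
-/

open MeasureTheory Set
open scoped RealInnerProductSpace NNReal ENNReal

section Normed

variable {Ω E F : Type*} {m m0 : MeasurableSpace Ω} {μ : Measure Ω}
  [NormedAddCommGroup E] [NormedSpace ℝ E] [NormedAddCommGroup F] [NormedSpace ℝ F]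

theorem norm_add_smul_apply_le {A : E →L[ℝ] E} {lam Γ : ℝ} (hlam : 0 ≤ lam) (hA : ‖A‖ ≤ Γ)
    (v : E) : ‖v + lam • A v‖ ≤ (1 + lam * Γ) * ‖v‖ := by
  calc ‖v + lam • A v‖ ≤ ‖v‖ + lam * ‖A v‖ := by
        simpa [norm_smul, abs_of_nonneg hlam] using norm_add_le v (lam • A v)
    _ ≤ ‖v‖ + lam * (Γ * ‖v‖) := by gcongr; exact A.le_of_opNorm_le hA v
    _ = (1 + lam * Γ) * ‖v‖ := by ring

theorem MeasureTheory.StronglyMeasurable.clm_apply {A : Ω → E →L[ℝ] F} {Y : Ω → E}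
    (hA : StronglyMeasurable[m] A) (hY : StronglyMeasurable[m] Y) :
    StronglyMeasurable[m] fun ω => A ω (Y ω) :=
  (continuous_fst.clm_apply continuous_snd).comp_stronglyMeasurable (hA.prodMk hY)

theorem MeasureTheory.MemLp.clm_apply {A : Ω → E →L[ℝ] F} {Y : Ω → E} {p : ℝ≥0∞} {Γ : ℝ}
    (hA : AEStronglyMeasurable A μ) (hA_norm : ∀ ω, ‖A ω‖ ≤ Γ) (hY : MemLp Y p μ) :
    MemLp (fun ω => A ω (Y ω)) p μ :=
  hY.of_le_mul ((continuous_fst.clm_apply continuous_snd).comp_aestronglyMeasurable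
    (hA.prodMk hY.1)) (ae_of_all _ fun ω => (A ω).le_of_opNorm_le (hA_norm ω) _)

theorem MeasureTheory.MemLp.preconditioned_step {X Y : Ω → E} {A : Ω → E →L[ℝ] E} {p : ℝ≥0∞}
    {η lam Γ : ℝ} (hX : MemLp X p μ) (hY : MemLp Y p μ) (hA : AEStronglyMeasurable A μ)
    (hA_norm : ∀ ω, ‖A ω‖ ≤ Γ) : MemLp (fun ω => X ω - η • (Y ω + lam • A ω (Y ω))) p μ :=
  hX.sub ((hY.add ((hY.clm_apply hA hA_norm).const_smul lam)).const_smul η)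

end Normed

theorem LipschitzWith.comp_memLp_of_isFiniteMeasure {Ω E F : Type*} {m0 : MeasurableSpace Ω}
    {μ : Measure Ω} [IsFiniteMeasure μ] [NormedAddCommGroup E] [NormedAddCommGroup F]
    {g : E → F} {K : ℝ≥0} (hg : LipschitzWith K g) {X : Ω → E} {p : ℝ≥0∞}
    (hX : MemLp X p μ) : MemLp (fun ω => g (X ω)) p μ := by
  refine MemLp.of_le ((memLp_const (g 0)).norm.add (hX.norm.const_mul K))
    (hg.continuous.comp_aestronglyMeasurable hX.1) (ae_of_all _ fun ω => ?_)
  have := hg.norm_sub_le (X ω) 0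
  rw [sub_zero] at this
  simp only [Pi.add_apply, Real.norm_eq_abs]
  rw [abs_of_nonneg (by positivity)]
  linarith [norm_le_norm_add_norm_sub' (g (X ω)) (g 0)]

theorem MeasureTheory.MemLp.of_integrable_norm_sub_sq {Ω E : Type*} {m0 : MeasurableSpace Ω}
    {μ : Measure Ω} [NormedAddCommGroup E] {Y Z : Ω → E} (hZ : MemLp Z 2 μ)
    (hY : AEStronglyMeasurable Y μ) (hYZ : Integrable (fun ω => ‖Y ω - Z ω‖ ^ 2) μ) :
    MemLp Y 2 μ := by
  simpa using ((memLp_two_iff_integrable_sq_norm (hY.sub hZ.1)).2 hYZ).add hZ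

theorem MeasureTheory.MemLp.integrable_inner {Ω E : Type*} {m0 : MeasurableSpace Ω}
    {μ : Measure Ω} [NormedAddCommGroup E] [InnerProductSpace ℝ E] {f g : Ω → E}
    (hf : MemLp f 2 μ) (hg : MemLp g 2 μ) : Integrable (fun ω => ⟪f ω, g ω⟫) μ :=
  (L2.integrable_inner (𝕜 := ℝ) (hf.toLp f) (hg.toLp g)).congr <| by
    filter_upwards [hf.coeFn_toLp, hg.coeFn_toLp] with ω hfω hgω
    rw [hfω, hgω]

section Smooth

variable {E : Type*} [NormedAddCommGroup E] [InnerProductSpace ℝ E] [CompleteSpace E]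
  {f : E → ℝ} {K : ℝ≥0}

theorem abs_sub_sub_inner_gradient_le (hf : Differentiable ℝ f)
    (hK : LipschitzWith K (gradient f)) (x y : E) :
    |f y - f x - ⟪gradient f x, y - x⟫| ≤ K / 2 * ‖y - x‖ ^ 2 := by
  set v := y - x
  have hderiv (s : ℝ) : HasDerivAt (fun s => f (x + s • v) - f x - s * ⟪gradient f x, v⟫)
      ⟪gradient f (x + s • v) - gradient f x, v⟫ s := by
    have hline : HasDerivAt (fun s : ℝ => x + s • v) v s := by
      simpa using ((hasDerivAt_id s).smul_const v).const_add x
    have := (((hf _).hasGradientAt.hasFDerivAt.comp_hasDerivAt s hline).sub_const (f x)).fun_sub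
      ((hasDerivAt_id s).mul_const ⟪gradient f x, v⟫)
    simpa [inner_sub_left] using this
  have hbound (s : ℝ) (hs : s ∈ Ico (0 : ℝ) 1) :
      ‖⟪gradient f (x + s • v) - gradient f x, v⟫‖ ≤ K * ‖v‖ ^ 2 * s := by
    calc _ ≤ ‖gradient f (x + s • v) - gradient f x‖ * ‖v‖ := norm_inner_le_norm _ _
      _ ≤ K * ‖x + s • v - x‖ * ‖v‖ := by gcongr; exact hK.norm_sub_le _ _
      _ = K * ‖v‖ ^ 2 * s := by
        rw [add_sub_cancel_left, norm_smul, Real.norm_of_nonneg hs.1]; ring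
  have hB (s : ℝ) : HasDerivAt (fun s => K / 2 * ‖v‖ ^ 2 * s ^ 2) (K * ‖v‖ ^ 2 * s) s :=
    ((hasDerivAt_pow 2 s).const_mul _).congr_deriv (by norm_num; ring)
  simpa [v] using image_norm_le_of_norm_deriv_right_le_deriv_boundary
    (fun s _ => (hderiv s).continuousAt.continuousWithinAt)
    (fun s _ => (hderiv s).hasDerivWithinAt) (by simp) hB hbound (right_mem_Icc.2 zero_le_one)

theorem apply_preconditioned_step_le (hf : Differentiable ℝ f)
    (hK : LipschitzWith K (gradient f)) {A : E →L[ℝ] E} {lam Γ : ℝ} (hlam : 0 ≤ lam)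
    (hA : ‖A‖ ≤ Γ) (η : ℝ) (x v : E) :
    f (x - η • (v + lam • A v)) ≤ f x - η * ⟪gradient f x, v⟫
      - η * lam * ⟪gradient f x, A v⟫ + K * η ^ 2 / 2 * (1 + lam * Γ) ^ 2 * ‖v‖ ^ 2 := by
  have htaylor := (abs_le.1 (abs_sub_sub_inner_gradient_le hf hK x
    (x - η • (v + lam • A v)))).2
  rw [sub_sub_cancel_left, norm_neg, norm_smul, mul_pow, Real.norm_eq_abs, sq_abs,
    inner_neg_right, inner_smul_right, inner_add_right, inner_smul_right] at htaylor
  have hnorm : (K : ℝ) / 2 * (η ^ 2 * ‖v + lam • A v‖ ^ 2)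
      ≤ K / 2 * (η ^ 2 * ((1 + lam * Γ) * ‖v‖) ^ 2) := by
    gcongr; exact norm_add_smul_apply_le hlam hA v
  linarith

theorem integrable_comp_of_memLp_two {Ω : Type*} {m0 : MeasurableSpace Ω} {μ : Measure Ω}
    [IsFiniteMeasure μ] (hf : Differentiable ℝ f) (hK : LipschitzWith K (gradient f))
    {X : Ω → E} (hX : MemLp X 2 μ) : Integrable (fun ω => f (X ω)) μ := by
  refine Integrable.mono' (g := fun ω => |f 0| + ‖gradient f 0‖ * ‖X ω‖ + K / 2 * ‖X ω‖ ^ 2)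
    (((integrable_const _).add ((hX.integrable one_le_two).norm.const_mul _)).add
      ((hX.integrable_norm_pow two_ne_zero).const_mul _))
    (hf.continuous.comp_aestronglyMeasurable hX.1) (ae_of_all _ fun ω => ?_)
  have htaylor := abs_sub_sub_inner_gradient_le hf hK 0 (X ω)
  have hinner := abs_real_inner_le_norm (gradient f 0) (X ω)
  rw [sub_zero, abs_le] at htaylor
  rw [abs_le] at hinner
  rw [Real.norm_eq_abs, abs_le]
  constructor <;> linarith [neg_abs_le (f 0), le_abs_self (f 0)]

end Smooth

theorem integral_le_of_condExp_le_const {Ω : Type*} {m m0 : MeasurableSpace Ω} {μ : Measure Ω}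
    [IsProbabilityMeasure μ] (hm : m ≤ m0) {X : Ω → ℝ} {c : ℝ}
    (hX : μ[X | m] ≤ᵐ[μ] fun _ => c) : ∫ ω, X ω ∂μ ≤ c := by
  rw [← integral_condExp hm]
  simpa using integral_mono_ae integrable_condExp (integrable_const c) hX

section ConditionalMean

variable {Ω E : Type*} {m m0 : MeasurableSpace Ω} {μ : Measure Ω}
  [NormedAddCommGroup E] [InnerProductSpace ℝ E] [CompleteSpace E]

theorem integral_inner_eq_of_condExp_ae_eq (hm : m ≤ m0) [SigmaFinite (μ.trim hm)]
    {f g h : Ω → E} (hf : StronglyMeasurable[m] f) (hfg : Integrable (fun ω => ⟪f ω, g ω⟫) μ)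
    (hg : Integrable g μ) (hgh : μ[g | m] =ᵐ[μ] h) :
    ∫ ω, ⟪f ω, g ω⟫ ∂μ = ∫ ω, ⟪f ω, h ω⟫ ∂μ := by
  rw [← integral_condExp hm]
  refine integral_congr_ae ?_
  filter_upwards [condExp_bilin_of_stronglyMeasurable_left (innerSL ℝ) hf hfg hg, hgh]
    with ω hpull hmean
  rw [← hmean]
  exact hpull

variable [IsProbabilityMeasure μ] {Y Z : Ω → E}

theorem integral_inner_eq_integral_norm_sq_of_condExp_ae_eq (hm : m ≤ m0)
    (hZ : StronglyMeasurable[m] Z) (hZ2 : MemLp Z 2 μ) (hY2 : MemLp Y 2 μ)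
    (hYZ : μ[Y | m] =ᵐ[μ] Z) : ∫ ω, ⟪Z ω, Y ω⟫ ∂μ = ∫ ω, ‖Z ω‖ ^ 2 ∂μ := by
  rw [integral_inner_eq_of_condExp_ae_eq hm hZ (hZ2.integrable_inner hY2)
    (hY2.integrable one_le_two) hYZ]
  simp_rw [real_inner_self_eq_norm_sq]

theorem integral_norm_sq_le_of_condExp_ae_eq (hm : m ≤ m0)
    (hZ : StronglyMeasurable[m] Z) (hZ2 : MemLp Z 2 μ) (hY2 : MemLp Y 2 μ)
    (hYZ : μ[Y | m] =ᵐ[μ] Z) {σ : ℝ}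
    (hvar : μ[fun ω => ‖Y ω - Z ω‖ ^ 2 | m] ≤ᵐ[μ] fun _ => σ ^ 2) :
    ∫ ω, ‖Y ω‖ ^ 2 ∂μ ≤ ∫ ω, ‖Z ω‖ ^ 2 ∂μ + σ ^ 2 := by
  have hsplit (ω : Ω) : ‖Y ω‖ ^ 2 = ‖Y ω - Z ω‖ ^ 2 + 2 * ⟪Z ω, Y ω⟫ - ‖Z ω‖ ^ 2 := by
    rw [norm_sub_sq_real, real_inner_comm]; ring
  have hcross := integral_inner_eq_integral_norm_sq_of_condExp_ae_eq hm hZ hZ2 hY2 hYZ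
  have hvar' := integral_le_of_condExp_le_const hm hvar
  have hdev : Integrable (fun ω => ‖Y ω - Z ω‖ ^ 2) μ :=
    (hY2.sub hZ2).integrable_norm_pow two_ne_zero
  have hinner : Integrable (fun ω => 2 * ⟪Z ω, Y ω⟫) μ := (hZ2.integrable_inner hY2).const_mul 2
  simp_rw [hsplit]
  rw [integral_sub (hdev.fun_add hinner) (hZ2.integrable_norm_pow two_ne_zero),
    integral_add hdev hinner, integral_const_mul, hcross]
  linarith

theorem integral_inner_clm_apply_nonneg_of_condExp_ae_eq (hm : m ≤ m0)
    (hZ : StronglyMeasurable[m] Z) (hZ2 : MemLp Z 2 μ) (hY2 : MemLp Y 2 μ)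
    (hYZ : μ[Y | m] =ᵐ[μ] Z) {A : Ω → E →L[ℝ] E} {Γ : ℝ} (hA : StronglyMeasurable[m] A)
    (hA_pos : ∀ ω, (A ω).IsPositive) (hA_norm : ∀ ω, ‖A ω‖ ≤ Γ) :
    0 ≤ ∫ ω, ⟪Z ω, A ω (Y ω)⟫ ∂μ := by
  have hAZ2 : MemLp (fun ω => A ω (Z ω)) 2 μ :=
    hZ2.clm_apply (hA.mono hm).aestronglyMeasurable hA_norm
  simp_rw [← (hA_pos _).inner_left_eq_inner_right]
  rw [integral_inner_eq_of_condExp_ae_eq hm (hA.clm_apply hZ) (hAZ2.integrable_inner hY2)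
    (hY2.integrable one_le_two) hYZ]
  exact integral_nonneg fun ω => (hA_pos ω).inner_nonneg_left _

end ConditionalMean

theorem integral_preconditioned_step_le {Ω E : Type*} {m m0 : MeasurableSpace Ω}
    {μ : Measure Ω} [IsProbabilityMeasure μ] [NormedAddCommGroup E] [InnerProductSpace ℝ E]
    [CompleteSpace E] {f : E → ℝ} {K : ℝ≥0} {X Y : Ω → E} {A : Ω → E →L[ℝ] E} {lam Γ η σ : ℝ}
    (hm : m ≤ m0) (hf : Differentiable ℝ f)
    (hK : LipschitzWith K (gradient f)) (hX : StronglyMeasurable[m] X) (hX2 : MemLp X 2 μ)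
    (hY : Integrable Y μ) (hmean : μ[Y | m] =ᵐ[μ] fun ω => gradient f (X ω))
    (hvar_int : Integrable (fun ω => ‖Y ω - gradient f (X ω)‖ ^ 2) μ)
    (hvar : μ[fun ω => ‖Y ω - gradient f (X ω)‖ ^ 2 | m] ≤ᵐ[μ] fun _ => σ ^ 2)
    (hA : StronglyMeasurable[m] A) (hA_pos : ∀ ω, (A ω).IsPositive)
    (hA_norm : ∀ ω, ‖A ω‖ ≤ Γ) (hη : 0 ≤ η) (hlam : 0 ≤ lam) :
    ∫ ω, f (X ω - η • (Y ω + lam • A ω (Y ω))) ∂μ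
      ≤ ∫ ω, f (X ω) ∂μ
        - η * (1 - K * η / 2 * (1 + lam * Γ) ^ 2) * ∫ ω, ‖gradient f (X ω)‖ ^ 2 ∂μ
        + K * η ^ 2 / 2 * (1 + lam * Γ) ^ 2 * σ ^ 2 := by
  have hZ : StronglyMeasurable[m] fun ω => gradient f (X ω) :=
    hK.continuous.comp_stronglyMeasurable hX
  have hZ2 : MemLp (fun ω => gradient f (X ω)) 2 μ := hK.comp_memLp_of_isFiniteMeasure hX2
  have hY2 : MemLp Y 2 μ := hZ2.of_integrable_norm_sub_sq hY.1 hvar_int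
  have hAY2 : MemLp (fun ω => A ω (Y ω)) 2 μ :=
    hY2.clm_apply (hA.mono hm).aestronglyMeasurable hA_norm
  have hcross := integral_inner_eq_integral_norm_sq_of_condExp_ae_eq hm hZ hZ2 hY2 hmean
  have hprecond :=
    integral_inner_clm_apply_nonneg_of_condExp_ae_eq hm hZ hZ2 hY2 hmean hA hA_pos hA_norm
  have hsecond_moment := integral_norm_sq_le_of_condExp_ae_eq hm hZ hZ2 hY2 hmean hvar
  have hfX := integrable_comp_of_memLp_two hf hK hX2
  have hcross_int : Integrable (fun ω => η * ⟪gradient f (X ω), Y ω⟫) μ :=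
    (hZ2.integrable_inner hY2).const_mul η
  have hprecond_int : Integrable (fun ω => η * lam * ⟪gradient f (X ω), A ω (Y ω)⟫) μ :=
    (hZ2.integrable_inner hAY2).const_mul (η * lam)
  have hnoise_int : Integrable (fun ω => K * η ^ 2 / 2 * (1 + lam * Γ) ^ 2 * ‖Y ω‖ ^ 2) μ :=
    (hY2.integrable_norm_pow two_ne_zero).const_mul _
  have hstep := integral_mono
    (integrable_comp_of_memLp_two hf hK (hX2.preconditioned_step hY2
      (hA.mono hm).aestronglyMeasurable hA_norm))
    (((hfX.sub' hcross_int).sub' hprecond_int).fun_add hnoise_int)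
    (fun ω => apply_preconditioned_step_le hf hK hlam (hA_norm ω) η (X ω) (Y ω))
  rw [integral_add ((hfX.sub' hcross_int).sub' hprecond_int) hnoise_int,
    integral_sub (hfX.sub' hcross_int) hprecond_int, integral_sub hfX hcross_int,
    integral_const_mul, integral_const_mul, integral_const_mul, hcross] at hstep
  have := mul_nonneg (mul_nonneg hη hlam) hprecond
  have := mul_le_mul_of_nonneg_left hsecond_moment
    (by positivity : (0 : ℝ) ≤ K * η ^ 2 / 2 * (1 + lam * Γ) ^ 2)
  linarith

theorem fire_one_step_descent_general
    {d : ℕ} {Ω : Type*} {m0 : MeasurableSpace Ω}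
    (μ : Measure Ω) [IsProbabilityMeasure μ] (ℱ : Filtration ℕ m0)
    (𝓛 : EuclideanSpace ℝ (Fin d) → ℝ) (L : ℝ) (hL : 0 < L)
    (hdiff : Differentiable ℝ 𝓛)
    (hsmooth : ∀ a b, ‖gradient 𝓛 a - gradient 𝓛 b‖ ≤ L * ‖a - b‖)
    (η lam G σ : ℝ) (hlam : 0 ≤ lam)
    (hη : 0 < η)
    (θ g : ℕ → Ω → EuclideanSpace ℝ (Fin d))
    (IG : ℕ → Ω → (EuclideanSpace ℝ (Fin d) →L[ℝ] EuclideanSpace ℝ (Fin d)))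
    (θ0 : EuclideanSpace ℝ (Fin d)) (hθ0 : θ 0 = fun _ => θ0)
    (hupdate : ∀ t ω, θ (t + 1) ω = θ t ω - η • (g t ω + lam • (IG t ω) (g t ω)))
    (hg_meas : ∀ t, StronglyMeasurable[ℱ (t + 1)] (g t))
    (hg_int : ∀ t, Integrable (g t) μ)
    (hmean : ∀ t, μ[g t | ℱ t] =ᵐ[μ] fun ω => gradient 𝓛 (θ t ω))
    (hvar_int : ∀ t, Integrable (fun ω => ‖g t ω - gradient 𝓛 (θ t ω)‖ ^ 2) μ)
    (hvar : ∀ t, μ[fun ω => ‖g t ω - gradient 𝓛 (θ t ω)‖ ^ 2 | ℱ t]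
      ≤ᵐ[μ] fun _ => σ ^ 2)
    (hIG_meas : ∀ t, StronglyMeasurable[ℱ t] (IG t))
    (hIG_symm : ∀ t ω v w, ⟪(IG t ω) v, w⟫ = ⟪v, (IG t ω) w⟫)
    (hIG_psd : ∀ t ω v, 0 ≤ ⟪(IG t ω) v, v⟫)
    (hIG_norm : ∀ t ω, ‖IG t ω‖ ≤ G) :
    ∀ t : ℕ,
      ∫ ω, 𝓛 (θ (t + 1) ω) ∂μ
        ≤ (∫ ω, 𝓛 (θ t ω) ∂μ)
          - η * (1 - (L * η / 2) * (1 + lam * G) ^ 2)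
            * (∫ ω, ‖gradient 𝓛 (θ t ω)‖ ^ 2 ∂μ)
          + (L * η ^ 2 / 2) * (1 + lam * G) ^ 2 * σ ^ 2 := by
  have hK : LipschitzWith L.toNNReal (gradient 𝓛) := LipschitzWith.of_dist_le_mul fun a b => by
    simpa [dist_eq_norm, Real.coe_toNNReal _ hL.le] using hsmooth a b
  have hIG_pos (t : ℕ) (ω : Ω) : (IG t ω).IsPositive :=
    (ContinuousLinearMap.isPositive_iff _).2 ⟨hIG_symm t ω, hIG_psd t ω⟩
  have hθ_meas (t : ℕ) : StronglyMeasurable[ℱ t] (θ t) := by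
    induction t with
    | zero => rw [hθ0]; exact stronglyMeasurable_const
    | succ t ih =>
      have hle := ℱ.mono t.le_succ
      rw [funext (hupdate t)]
      exact (ih.mono hle).sub (((hg_meas t).add
        ((((hIG_meas t).mono hle).clm_apply (hg_meas t)).const_smul lam)).const_smul η)
  have hθ_L2 (t : ℕ) : MemLp (θ t) 2 μ := by
    induction t with
    | zero => rw [hθ0]; exact memLp_const θ0
    | succ t ih =>
      rw [funext (hupdate t)]
      exact ih.preconditioned_step ((hK.comp_memLp_of_isFiniteMeasure ih).of_integrable_norm_sub_sq
        (hg_int t).1 (hvar_int t)) ((hIG_meas t).mono (ℱ.le t)).aestronglyMeasurable (hIG_norm t)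
  intro t
  have hdescent := integral_preconditioned_step_le (ℱ.le t) hdiff hK (hθ_meas t) (hθ_L2 t)
    (hg_int t) (hmean t) (hvar_int t) (hvar t) (hIG_meas t) (hIG_pos t) (hIG_norm t) hη.le hlam
  rw [Real.coe_toNNReal _ hL.le] at hdescent
  simpa only [hupdate] using hdescent

/-- one-step descent inequality for the FIRE preconditioned SGD update.
Let `𝓛` be `L`-smooth and bounded below, `θ^(t+1) = θ^(t) − η (I + λ I_G^(t)) g_t` with
unbiased gradients of conditional variance at most `σ²` and `ℱ_t`-measurable symmetric PSD
preconditioners `I_G^(t)` of operator norm at most `G`. If `0 < η ≤ 1/(L(1+λG)²)`, then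
`E[𝓛(θ^(t+1))] ≤ E[𝓛(θ^(t))] − η(1 − (Lη/2)(1+λG)²) E[‖∇𝓛(θ^(t))‖²]
  + (Lη²/2)(1+λG)² σ²`. -/
theorem fire_one_step_descent
    {d : ℕ} {Ω : Type*} {m0 : MeasurableSpace Ω}
    (μ : Measure Ω) [IsProbabilityMeasure μ] (ℱ : Filtration ℕ m0)
    (𝓛 : EuclideanSpace ℝ (Fin d) → ℝ) (L Lstar : ℝ) (hL : 0 < L)
    (hdiff : Differentiable ℝ 𝓛)
    (hsmooth : ∀ a b, ‖gradient 𝓛 a - gradient 𝓛 b‖ ≤ L * ‖a - b‖)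
    (hbdd : ∀ p, Lstar ≤ 𝓛 p)
    (η lam G σ : ℝ) (hlam : 0 ≤ lam) (hG : 0 ≤ G)
    (hη : 0 < η) (hη' : η ≤ 1 / (L * (1 + lam * G) ^ 2))
    (θ g : ℕ → Ω → EuclideanSpace ℝ (Fin d))
    (IG : ℕ → Ω → (EuclideanSpace ℝ (Fin d) →L[ℝ] EuclideanSpace ℝ (Fin d)))
    (θ0 : EuclideanSpace ℝ (Fin d)) (hθ0 : θ 0 = fun _ => θ0)
    (hupdate : ∀ t ω, θ (t + 1) ω = θ t ω - η • (g t ω + lam • (IG t ω) (g t ω)))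
    (hg_meas : ∀ t, StronglyMeasurable[ℱ (t + 1)] (g t))
    (hg_int : ∀ t, Integrable (g t) μ)
    (hmean : ∀ t, μ[g t | ℱ t] =ᵐ[μ] fun ω => gradient 𝓛 (θ t ω))
    (hvar_int : ∀ t, Integrable (fun ω => ‖g t ω - gradient 𝓛 (θ t ω)‖ ^ 2) μ)
    (hvar : ∀ t, μ[fun ω => ‖g t ω - gradient 𝓛 (θ t ω)‖ ^ 2 | ℱ t]
      ≤ᵐ[μ] fun _ => σ ^ 2)
    (hIG_meas : ∀ t, StronglyMeasurable[ℱ t] (IG t))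
    (hIG_symm : ∀ t ω v w, ⟪(IG t ω) v, w⟫ = ⟪v, (IG t ω) w⟫)
    (hIG_psd : ∀ t ω v, 0 ≤ ⟪(IG t ω) v, v⟫)
    (hIG_norm : ∀ t ω, ‖IG t ω‖ ≤ G) :
    ∀ t : ℕ,
      ∫ ω, 𝓛 (θ (t + 1) ω) ∂μ
        ≤ (∫ ω, 𝓛 (θ t ω) ∂μ)
          - η * (1 - (L * η / 2) * (1 + lam * G) ^ 2)
            * (∫ ω, ‖gradient 𝓛 (θ t ω)‖ ^ 2 ∂μ)
          + (L * η ^ 2 / 2) * (1 + lam * G) ^ 2 * σ ^ 2 :=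
  fire_one_step_descent_general μ ℱ 𝓛 L hL hdiff hsmooth η lam G σ hlam hη θ g IG θ0 hθ0 hupdate
    hg_meas hg_int hmean hvar_int hvar hIG_meas hIG_symm hIG_psd hIG_norm
end

section
/- Let 𝓛 : ℝ^d → ℝ be L-smooth and bounded below by 𝓛⋆. On a probability space with filtration (𝓕_t), let θ^(0) be deterministic and define θ^(t+1) = θ^(t) − η (I + λ I_G^(t)) g_t, where λ ≥ 0, g_t is 𝓕_{t+1}-measurable with E[g_t | 𝓕_t] = ∇𝓛(θ^(t)) and E[‖g_t − ∇𝓛(θ^(t))‖² | 𝓕_t] ≤ σ², and I_G^(t) is an 𝓕_t-measurable symmetric positive semidefinite d×d matrix with ‖I_G^(t)‖_op ≤ G. If 0 < η ≤ 1/(L(1+λG)²), then for every T ≥ 1: (1/T) Σ_{t=0}^{T−1} E[‖(I + λ I_G^(t)) ∇𝓛(θ^(t))‖²] ≤ (1+λG)² · ( 2(𝓛(θ^(0)) − 𝓛⋆)/(ηT) + η·L·(1+λG)²·σ² ). -/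
/-!
Write `P = I + λ I_G` and `κ = 1 + λ G`. Then `P` is symmetric with `0 ≤ P ≤ κ`, so
`‖P v‖² ≤ κ ⟪v, P v⟫`. Split the stochastic gradient as `g_t = ∇𝓛(θ_t) + n_t`. The descent lemma
for the step `-η P g_t` bounds `𝓛(θ_{t+1})` by `𝓛(θ_t) - η ⟪∇, P ∇⟫ + (L η² / 2) ‖P ∇‖²`,
plus `(L η² κ² / 2) ‖n_t‖²`, plus terms `⟪W, n_t⟫` with `𝓕_t`-measurable `W`. These last
terms have expectation zero. Since `L η κ ≤ 1`, what is left is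
`η E‖P ∇‖² ≤ 2κ (E 𝓛(θ_t) - E 𝓛(θ_{t+1})) + L η² κ³ σ²`, and the sum over `t < T` telescopes.
The constants in the statement then come from `κ ≤ κ²` and `κ³ ≤ κ⁴`.
-/

open MeasureTheory
open scoped RealInnerProductSpace NNReal

section Preconditioner

variable {E : Type*} [NormedAddCommGroup E] [InnerProductSpace ℝ E]

/-- Cauchy–Schwarz for the semi-inner product `(u, w) ↦ ⟪T u, w⟫`, applied to `v` and
`T v`. -/
theorem norm_apply_sq_le_mul_inner_apply_self {T : E →L[ℝ] E}
    (hT : (T : E →ₗ[ℝ] E).IsSymmetric) (hpos : ∀ v, 0 ≤ ⟪T v, v⟫) {C : ℝ} (hC : ‖T‖ ≤ C)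
    (v : E) : ‖T v‖ ^ 2 ≤ C * ⟪T v, v⟫ := by
  have hquad : ∀ s : ℝ, 0 ≤ ⟪T (T v), T v⟫ * (s * s) + 2 * ‖T v‖ ^ 2 * s + ⟪T v, v⟫ := by
    intro s
    have hswap : ⟪T (T v), v⟫ = ⟪T v, T v⟫ := hT (T v) v
    calc 0 ≤ ⟪T (v + s • T v), v + s • T v⟫ := hpos _
      _ = _ := by
        simp only [map_add, map_smul, inner_add_left, inner_add_right, real_inner_smul_left,
          real_inner_smul_right, ← real_inner_self_eq_norm_sq]
        linear_combination s * hswap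
  have hdisc : (2 * ‖T v‖ ^ 2) ^ 2 ≤ 4 * ⟪T (T v), T v⟫ * ⟪T v, v⟫ := by
    have := discrim_le_zero hquad
    rw [discrim] at this
    linarith
  have hTTv : ⟪T (T v), T v⟫ ≤ C * ‖T v‖ ^ 2 :=
    (real_inner_le_norm _ _).trans <| by
      nlinarith [T.le_of_opNorm_le hC (T v), norm_nonneg (T v)]
  have hC0 : 0 ≤ C := (norm_nonneg T).trans hC
  nlinarith [hpos v, mul_le_mul_of_nonneg_right hTTv (hpos v), sq_nonneg (‖T v‖ ^ 2 - C * ⟪T v, v⟫),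
    mul_nonneg hC0 (hpos v)]

theorem one_add_smul_apply (A : E →L[ℝ] E) (c : ℝ) (v : E) : (1 + c • A) v = v + c • A v := rfl

theorem isSymmetric_one_add_smul {A : E →L[ℝ] E} (hA : (A : E →ₗ[ℝ] E).IsSymmetric) (c : ℝ) :
    ((1 + c • A : E →L[ℝ] E) : E →ₗ[ℝ] E).IsSymmetric := fun v w => by
  change ⟪(1 + c • A) v, w⟫ = ⟪v, (1 + c • A) w⟫
  simp only [one_add_smul_apply, inner_add_left, inner_add_right, real_inner_smul_left,
    real_inner_smul_right]
  rw [show ⟪A v, w⟫ = ⟪v, A w⟫ from hA v w]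

theorem inner_one_add_smul_apply_self_nonneg {A : E →L[ℝ] E} (hA : ∀ v, 0 ≤ ⟪A v, v⟫) {c : ℝ}
    (hc : 0 ≤ c) (v : E) : 0 ≤ ⟪(1 + c • A) v, v⟫ := by
  rw [one_add_smul_apply, inner_add_left, real_inner_smul_left]
  exact add_nonneg real_inner_self_nonneg (mul_nonneg hc (hA v))

theorem norm_one_add_smul_le {A : E →L[ℝ] E} {c G : ℝ} (hc : 0 ≤ c) (hA : ‖A‖ ≤ G) :
    ‖1 + c • A‖ ≤ 1 + c * G :=
  calc ‖1 + c • A‖ ≤ ‖(1 : E →L[ℝ] E)‖ + ‖c • A‖ := norm_add_le _ _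
    _ ≤ 1 + c * G := by
      rw [norm_smul, Real.norm_of_nonneg hc]
      gcongr
      exact ContinuousLinearMap.norm_id_le

end Preconditioner

section Descent

variable {E : Type*} [NormedAddCommGroup E] [InnerProductSpace ℝ E] [CompleteSpace E]

theorem le_add_inner_gradient_add_sq_of_lipschitzWith {f : E → ℝ} {K : ℝ≥0}
    (hf : Differentiable ℝ f) (hK : LipschitzWith K (gradient f)) (x v : E) :
    f (x + v) ≤ f x + ⟪gradient f x, v⟫ + K / 2 * ‖v‖ ^ 2 := by
  let φ : ℝ → ℝ := fun s => f (x + s • v) - s * ⟪gradient f x, v⟫ - K / 2 * s ^ 2 * ‖v‖ ^ 2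
  have hφ : ∀ s, HasDerivAt φ (⟪gradient f (x + s • v) - gradient f x, v⟫ - K * s * ‖v‖ ^ 2) s := by
    intro s
    have hline : HasDerivAt (fun u : ℝ => x + u • v) v s := by
      simpa using ((hasDerivAt_id s).smul_const v).const_add x
    have hfline : HasDerivAt (fun u => f (x + u • v)) ⟪gradient f (x + s • v), v⟫ s :=
      (hf _).hasGradientAt.hasFDerivAt.comp_hasDerivAt s hline
    refine ((hfline.sub ((hasDerivAt_id s).mul_const ⟪gradient f x, v⟫)).sub
      (((hasDerivAt_pow 2 s).const_mul (K / 2 : ℝ)).mul_const (‖v‖ ^ 2))).congr_deriv ?_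
    rw [inner_sub_left]
    push_cast
    ring
  have hanti : AntitoneOn φ (Set.Icc 0 1) := by
    refine antitoneOn_of_hasDerivWithinAt_nonpos (convex_Icc 0 1)
      (fun s _ => (hφ s).continuousAt.continuousWithinAt) (fun s _ => (hφ s).hasDerivWithinAt) ?_
    intro s hs
    rw [interior_Icc] at hs
    have hlip : ‖gradient f (x + s • v) - gradient f x‖ ≤ K * (s * ‖v‖) := by
      simpa [norm_smul, abs_of_pos hs.1] using hK.norm_sub_le (x + s • v) x
    nlinarith [real_inner_le_norm (gradient f (x + s • v) - gradient f x) v, norm_nonneg v,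
      mul_le_mul_of_nonneg_right hlip (norm_nonneg v)]
  have := hanti (by simp) (by simp) zero_le_one
  simp only [φ, zero_smul, add_zero, zero_mul, sub_zero, one_smul, one_mul, one_pow] at this
  linarith

theorem preconditioned_step_le {f : E → ℝ} {K : ℝ≥0}
    (hf : Differentiable ℝ f) (hK : LipschitzWith K (gradient f)) {P : E →L[ℝ] E}
    (hPsymm : (P : E →ₗ[ℝ] E).IsSymmetric) (hPpos : ∀ v, 0 ≤ ⟪P v, v⟫) {κ η : ℝ} (hPκ : ‖P‖ ≤ κ)
    (hη : 0 ≤ η) (hKηκ : K * η * κ ≤ 1) (x n : E) :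
    η * ‖P (gradient f x)‖ ^ 2 ≤ 2 * κ * (f x - f (x - η • P (gradient f x + n)))
      + K * η ^ 2 * κ ^ 3 * ‖n‖ ^ 2
      + 2 * κ * ⟪(K * η ^ 2) • P (P (gradient f x)) - η • P (gradient f x), n⟫ := by
  set u := gradient f x
  have hsymm : ∀ v w, ⟪P v, w⟫ = ⟪v, P w⟫ := hPsymm
  have hinner : ⟪u, -(η • P (u + n))⟫ = -(η * (⟪u, P u⟫ + ⟪P u, n⟫)) := by
    rw [inner_neg_right, real_inner_smul_right, map_add, inner_add_right, ← hsymm u n]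
  have hsq : ‖-(η • P (u + n))‖ ^ 2 = η ^ 2 * (‖P u‖ ^ 2 + 2 * ⟪P (P u), n⟫ + ‖P n‖ ^ 2) := by
    rw [norm_neg, norm_smul, mul_pow, Real.norm_eq_abs, sq_abs, map_add, norm_add_sq_real,
      hsymm (P u) n]
  have hdescent := le_add_inner_gradient_add_sq_of_lipschitzWith hf hK x (-(η • P (u + n)))
  rw [hinner, hsq, ← sub_eq_add_neg] at hdescent
  have hnoise : ‖P n‖ ^ 2 ≤ κ ^ 2 * ‖n‖ ^ 2 := by
    rw [← mul_pow]; exact pow_le_pow_left₀ (norm_nonneg _) (P.le_of_opNorm_le hPκ n) 2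
  have hgrad : ‖P u‖ ^ 2 ≤ κ * ⟪u, P u⟫ := by
    rw [real_inner_comm]; exact norm_apply_sq_le_mul_inner_apply_self hPsymm hPpos hPκ u
  have hκ : 0 ≤ κ := (norm_nonneg P).trans hPκ
  rw [inner_sub_left, real_inner_smul_left, real_inner_smul_left]
  nlinarith [mul_le_mul_of_nonneg_left hdescent (by positivity : (0:ℝ) ≤ 2 * κ),
    mul_le_mul_of_nonneg_left hgrad (by positivity : (0:ℝ) ≤ 2 * η),
    mul_le_mul_of_nonneg_left hnoise (by positivity : (0:ℝ) ≤ K * κ * η ^ 2),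
    mul_le_mul_of_nonneg_right hKηκ (by positivity : (0:ℝ) ≤ η * ‖P u‖ ^ 2)]

end Descent

section Integrability

variable {Ω E F : Type*} {m0 : MeasurableSpace Ω} {μ : Measure Ω}
  [NormedAddCommGroup E] [NormedAddCommGroup F]

theorem LipschitzWith.memLp_comp [IsFiniteMeasure μ] {g : E → F} {K : ℝ≥0}
    (hg : LipschitzWith K g) {p : ENNReal} {X : Ω → E} (hX : MemLp X p μ) :
    MemLp (fun ω => g (X ω)) p μ := by
  refine ((memLp_const ‖g 0‖).add (hX.norm.const_mul K)).of_le
    (hg.continuous.comp_aestronglyMeasurable hX.1) (ae_of_all _ fun ω => ?_)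
  have := norm_sub_norm_le (g (X ω)) (g 0) |>.trans (hg.norm_sub_le (X ω) 0)
  rw [sub_zero] at this
  simp only [Pi.add_apply, Real.norm_eq_abs]
  exact (by linarith : ‖g (X ω)‖ ≤ ‖g 0‖ + K * ‖X ω‖).trans (le_abs_self _)

theorem MeasureTheory.StronglyMeasurable.clm_apply_s10 {m : MeasurableSpace Ω} {𝕜 : Type*}
    [NontriviallyNormedField 𝕜] [NormedSpace 𝕜 E] [NormedSpace 𝕜 F] {P : Ω → E →L[𝕜] F}
    {X : Ω → E} (hP : StronglyMeasurable[m] P) (hX : StronglyMeasurable[m] X) : StronglyMeasurable[m] (fun ω => P ω (X ω)) :=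
  isBoundedBilinearMap_apply.continuous.comp_stronglyMeasurable (hP.prodMk hX)

theorem MeasureTheory.MemLp.clm_apply_of_norm_le {𝕜 : Type*} [NontriviallyNormedField 𝕜]
    [NormedSpace 𝕜 E] [NormedSpace 𝕜 F] {P : Ω → E →L[𝕜] F} {X : Ω → E} {κ : ℝ}
    (hP : AEStronglyMeasurable P μ) (hPκ : ∀ ω, ‖P ω‖ ≤ κ) {p : ENNReal} (hX : MemLp X p μ) :
    MemLp (fun ω => P ω (X ω)) p μ :=
  hX.of_le_mul (isBoundedBilinearMap_apply.continuous.comp_aestronglyMeasurable (hP.prodMk hX.1))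
    (ae_of_all _ fun ω => (P ω).le_of_opNorm_le (hPκ ω) (X ω))

end Integrability

section Expectation

variable {Ω E : Type*} {m m0 : MeasurableSpace Ω} {μ : Measure Ω}
  [NormedAddCommGroup E] [InnerProductSpace ℝ E]

theorem MeasureTheory.MemLp.integrable_inner_s10 {X Y : Ω → E} (hX : MemLp X 2 μ) (hY : MemLp Y 2 μ) :
    Integrable (fun ω => ⟪X ω, Y ω⟫) μ := by
  rw [← memLp_one_iff_integrable]
  exact hX.of_bilin (fun a b => ⟪a, b⟫) 1 hY (hX.1.inner hY.1)
    (ae_of_all _ fun ω => by simpa using nnnorm_inner_le_nnnorm (𝕜 := ℝ) (X ω) (Y ω))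

theorem integral_inner_eq_zero_of_condExp_eq_zero [CompleteSpace E] [IsFiniteMeasure μ]
    (hm : m ≤ m0) {X N : Ω → E} (hXm : StronglyMeasurable[m] X) (hX : MemLp X 2 μ)
    (hN : MemLp N 2 μ) (hNmean : μ[N|m] =ᵐ[μ] 0) : ∫ ω, ⟪X ω, N ω⟫ ∂μ = 0 := by
  have hpull := condExp_bilin_of_stronglyMeasurable_left (innerSL ℝ) hXm
    (hX.integrable_inner_s10 hN) (hN.integrable one_le_two)
  rw [← integral_condExp hm]
  refine integral_eq_zero_of_ae ?_
  filter_upwards [hpull, hNmean] with ω hpullω hω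
  exact hpullω.trans (by simp [hω])

theorem integral_le_of_condExp_le [IsProbabilityMeasure μ] (hm : m ≤ m0) {f : Ω → ℝ} {c : ℝ}
    (hf : μ[f|m] ≤ᵐ[μ] fun _ => c) : ∫ ω, f ω ∂μ ≤ c := by
  rw [← integral_condExp hm]
  calc _ ≤ ∫ _, c ∂μ := integral_mono_ae integrable_condExp (integrable_const c) hf
    _ = c := by simp

theorem condExp_sub_ae_eq_zero [CompleteSpace E] [IsFiniteMeasure μ] (hm : m ≤ m0)
    {g h : Ω → E} (hg : Integrable g μ) (hhm : StronglyMeasurable[m] h) (hh : Integrable h μ)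
    (hmean : μ[g|m] =ᵐ[μ] h) : μ[g - h|m] =ᵐ[μ] 0 := by
  filter_upwards [condExp_sub hg hh m, hmean] with ω hsub hω
  rw [hsub, Pi.sub_apply, hω, condExp_of_stronglyMeasurable hm hhm hh, Pi.zero_apply, sub_self]

end Expectation

section ExpectedDescent

variable {Ω E : Type*} {m m0 : MeasurableSpace Ω} {μ : Measure Ω}
  [NormedAddCommGroup E] [InnerProductSpace ℝ E] [CompleteSpace E]

theorem integrable_comp_of_lipschitzWith_gradient [IsFiniteMeasure μ] {f : E → ℝ} {K : ℝ≥0}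
    (hf : Differentiable ℝ f) (hK : LipschitzWith K (gradient f)) {c : ℝ} (hc : ∀ x, c ≤ f x)
    {X : Ω → E} (hX : MemLp X 2 μ) : Integrable (fun ω => f (X ω)) μ := by
  have hsq : Integrable (fun ω => ‖X ω‖ ^ 2) μ := (memLp_two_iff_integrable_sq_norm hX.1).mp hX
  have hnorm : Integrable (fun ω => ‖X ω‖) μ := hX.norm.integrable one_le_two
  refine Integrable.mono'
    ((((integrable_const (|c| + |f 0|)).add (hnorm.const_mul ‖gradient f 0‖)).add
      (hsq.const_mul (K / 2))))
    (hf.continuous.comp_aestronglyMeasurable hX.1) (ae_of_all _ fun ω => ?_)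
  have hup := le_add_inner_gradient_add_sq_of_lipschitzWith hf hK 0 (X ω)
  rw [zero_add] at hup
  have := real_inner_le_norm (gradient f 0) (X ω)
  rw [Real.norm_eq_abs, abs_le]
  simp only [Pi.add_apply]
  constructor <;> nlinarith [hc (X ω), le_abs_self c, neg_abs_le c, le_abs_self (f 0),
    neg_abs_le (f 0), norm_nonneg (X ω), norm_nonneg (gradient f 0), sq_nonneg ‖X ω‖,
    NNReal.coe_nonneg K]

theorem mul_integral_norm_sq_preconditioned_gradient_le [IsFiniteMeasure μ] (hm : m ≤ m0)
    {f : E → ℝ} {K : ℝ≥0} (hf : Differentiable ℝ f) (hK : LipschitzWith K (gradient f))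
    {c : ℝ} (hc : ∀ x, c ≤ f x) {X X' Y : Ω → E} {P : Ω → E →L[ℝ] E} {κ η : ℝ}
    (hXm : StronglyMeasurable[m] X) (hX : MemLp X 2 μ) (hX' : MemLp X' 2 μ)
    (hPm : StronglyMeasurable[m] P) (hPsymm : ∀ ω, (P ω : E →ₗ[ℝ] E).IsSymmetric)
    (hPpos : ∀ ω v, 0 ≤ ⟪P ω v, v⟫) (hPκ : ∀ ω, ‖P ω‖ ≤ κ)
    (hstep : ∀ ω, X' ω = X ω - η • P ω (Y ω))
    (hN : MemLp (fun ω => Y ω - gradient f (X ω)) 2 μ)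
    (hNmean : μ[fun ω => Y ω - gradient f (X ω)|m] =ᵐ[μ] 0)
    (hη : 0 ≤ η) (hKηκ : K * η * κ ≤ 1) :
    η * ∫ ω, ‖P ω (gradient f (X ω))‖ ^ 2 ∂μ
      ≤ 2 * κ * (∫ ω, f (X ω) ∂μ - ∫ ω, f (X' ω) ∂μ)
        + K * η ^ 2 * κ ^ 3 * ∫ ω, ‖Y ω - gradient f (X ω)‖ ^ 2 ∂μ := by
  set N := fun ω => Y ω - gradient f (X ω)
  have hFm : StronglyMeasurable[m] (fun ω => gradient f (X ω)) :=
    hK.continuous.comp_stronglyMeasurable hXm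
  have hF : MemLp (fun ω => gradient f (X ω)) 2 μ := hK.memLp_comp hX
  have hPμ : AEStronglyMeasurable P μ := (hPm.mono hm).aestronglyMeasurable
  have hPF : MemLp (fun ω => P ω (gradient f (X ω))) 2 μ := hF.clm_apply_of_norm_le hPμ hPκ
  set W := fun ω => (K * η ^ 2) • P ω (P ω (gradient f (X ω))) - η • P ω (gradient f (X ω))
  have hWm : StronglyMeasurable[m] W :=
    ((hPm.clm_apply_s10 (hPm.clm_apply_s10 hFm)).const_smul _).sub ((hPm.clm_apply_s10 hFm).const_smul _)
  have hW : MemLp W 2 μ :=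
    ((hPF.clm_apply_of_norm_le hPμ hPκ).const_smul _).sub (hPF.const_smul _)
  have hpointwise : ∀ ω, η * ‖P ω (gradient f (X ω))‖ ^ 2 ≤ 2 * κ * (f (X ω) - f (X' ω))
      + K * η ^ 2 * κ ^ 3 * ‖N ω‖ ^ 2 + 2 * κ * ⟪W ω, N ω⟫ := fun ω => by
    have := preconditioned_step_le hf hK (hPsymm ω) (hPpos ω) (hPκ ω) hη hKηκ (X ω) (N ω)
    rwa [add_sub_cancel, ← hstep] at this
  have hfX := integrable_comp_of_lipschitzWith_gradient hf hK hc hX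
  have hfX' := integrable_comp_of_lipschitzWith_gradient hf hK hc hX'
  have hdecrease : Integrable (fun ω => 2 * κ * (f (X ω) - f (X' ω))) μ :=
    (hfX.sub hfX').const_mul _
  have hnoise : Integrable (fun ω => K * η ^ 2 * κ ^ 3 * ‖N ω‖ ^ 2) μ :=
    ((memLp_two_iff_integrable_sq_norm hN.1).mp hN).const_mul _
  have hcross : Integrable (fun ω => 2 * κ * ⟪W ω, N ω⟫) μ := (hW.integrable_inner_s10 hN).const_mul _
  have hbound : Integrable (fun ω => 2 * κ * (f (X ω) - f (X' ω))
      + K * η ^ 2 * κ ^ 3 * ‖N ω‖ ^ 2) μ := hdecrease.add hnoise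
  calc η * ∫ ω, ‖P ω (gradient f (X ω))‖ ^ 2 ∂μ
      = ∫ ω, η * ‖P ω (gradient f (X ω))‖ ^ 2 ∂μ := (integral_const_mul _ _).symm
    _ ≤ ∫ ω, (2 * κ * (f (X ω) - f (X' ω)) + K * η ^ 2 * κ ^ 3 * ‖N ω‖ ^ 2
          + 2 * κ * ⟪W ω, N ω⟫) ∂μ :=
        integral_mono (((memLp_two_iff_integrable_sq_norm hPF.1).mp hPF).const_mul η)
          (hbound.add hcross) hpointwise
    _ = _ := by
        rw [integral_add hbound hcross, integral_add hdecrease hnoise,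
          integral_const_mul, integral_const_mul, integral_const_mul, integral_sub hfX hfX',
          integral_inner_eq_zero_of_condExp_eq_zero hm hWm hW hN hNmean, mul_zero, add_zero]

end ExpectedDescent

theorem average_le_of_mul_le_sub_succ {a c : ℕ → ℝ} {α β η ℓ : ℝ} (hη : 0 < η) (hα : 0 ≤ α)
    (hc : ∀ t, η * c t ≤ α * (a t - a (t + 1)) + β) (hℓ : ∀ t, ℓ ≤ a t) {T : ℕ} (hT : 0 < T) :
    1 / (T : ℝ) * ∑ t ∈ Finset.range T, c t ≤ α * (a 0 - ℓ) / (η * T) + β / η := by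
  have hT' : (0 : ℝ) < T := Nat.cast_pos.2 hT
  have hsum : η * ∑ t ∈ Finset.range T, c t ≤ α * (a 0 - ℓ) + T * β :=
    calc η * ∑ t ∈ Finset.range T, c t ≤ ∑ t ∈ Finset.range T, (α * (a t - a (t + 1)) + β) := by
          rw [Finset.mul_sum]
          exact Finset.sum_le_sum fun t _ => hc t
      _ = α * (a 0 - a T) + T * β := by
          rw [Finset.sum_add_distrib, ← Finset.mul_sum, Finset.sum_range_sub', Finset.sum_const,
            Finset.card_range, nsmul_eq_mul]
      _ ≤ α * (a 0 - ℓ) + T * β := by gcongr; exact hℓ T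
  calc 1 / (T : ℝ) * ∑ t ∈ Finset.range T, c t
      = (η * ∑ t ∈ Finset.range T, c t) / (η * T) := by field_simp
    _ ≤ (α * (a 0 - ℓ) + T * β) / (η * T) := by gcongr
    _ = α * (a 0 - ℓ) / (η * T) + β / η := by field_simp

section PreconditionedSGD

variable {Ω E : Type*} {m0 : MeasurableSpace Ω} [NormedAddCommGroup E] [InnerProductSpace ℝ E]
  [CompleteSpace E]

structure IsPreconditionedSGD (μ : Measure Ω) (ℱ : Filtration ℕ m0) (f : E → ℝ) (η κ σ : ℝ)
    (θ g : ℕ → Ω → E) (P : ℕ → Ω → E →L[ℝ] E) : Prop where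
  stronglyMeasurable_init : StronglyMeasurable[ℱ 0] (θ 0)
  memLp_init : MemLp (θ 0) 2 μ
  update : ∀ t ω, θ (t + 1) ω = θ t ω - η • P t ω (g t ω)
  stronglyMeasurable_grad : ∀ t, StronglyMeasurable[ℱ (t + 1)] (g t)
  integrable_grad : ∀ t, Integrable (g t) μ
  condExp_grad : ∀ t, μ[g t|ℱ t] =ᵐ[μ] fun ω => gradient f (θ t ω)
  integrable_noise_sq : ∀ t, Integrable (fun ω => ‖g t ω - gradient f (θ t ω)‖ ^ 2) μ
  condExp_noise_sq_le : ∀ t,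
    μ[fun ω => ‖g t ω - gradient f (θ t ω)‖ ^ 2|ℱ t] ≤ᵐ[μ] fun _ => σ ^ 2
  stronglyMeasurable_precond : ∀ t, StronglyMeasurable[ℱ t] (P t)
  isSymmetric_precond : ∀ t ω, (P t ω : E →ₗ[ℝ] E).IsSymmetric
  inner_precond_self_nonneg : ∀ t ω v, 0 ≤ ⟪P t ω v, v⟫
  norm_precond_le : ∀ t ω, ‖P t ω‖ ≤ κ

namespace IsPreconditionedSGD

variable {μ : Measure Ω} {ℱ : Filtration ℕ m0} {f : E → ℝ} {η κ σ : ℝ} {θ g : ℕ → Ω → E}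
  {P : ℕ → Ω → E →L[ℝ] E}

theorem nonneg_of_isProbabilityMeasure [IsProbabilityMeasure μ]
    (h : IsPreconditionedSGD μ ℱ f η κ σ θ g P) : 0 ≤ κ :=
  (norm_nonneg _).trans (h.norm_precond_le 0 (nonempty_of_isProbabilityMeasure μ).some)

theorem stronglyMeasurable (h : IsPreconditionedSGD μ ℱ f η κ σ θ g P) :
    ∀ t, StronglyMeasurable[ℱ t] (θ t)
  | 0 => h.stronglyMeasurable_init
  | t + 1 => by
    rw [funext (h.update t)]
    exact ((h.stronglyMeasurable t).mono (ℱ.mono t.le_succ)).sub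
      ((((h.stronglyMeasurable_precond t).mono (ℱ.mono t.le_succ)).clm_apply_s10
        (h.stronglyMeasurable_grad t)).const_smul η)

theorem memLp_noise (h : IsPreconditionedSGD μ ℱ f η κ σ θ g P) (hf : Continuous (gradient f))
    (t : ℕ) : MemLp (fun ω => g t ω - gradient f (θ t ω)) 2 μ :=
  (memLp_two_iff_integrable_sq_norm ((((h.stronglyMeasurable_grad t).mono (ℱ.le _)).sub
    ((hf.comp_stronglyMeasurable (h.stronglyMeasurable t)).mono (ℱ.le t))).aestronglyMeasurable)).2
    (h.integrable_noise_sq t)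

theorem memLp [IsFiniteMeasure μ] (h : IsPreconditionedSGD μ ℱ f η κ σ θ g P) {K : ℝ≥0}
    (hK : LipschitzWith K (gradient f)) : ∀ t, MemLp (θ t) 2 μ
  | 0 => h.memLp_init
  | t + 1 => by
    have hg : MemLp (g t) 2 μ := by
      convert (hK.memLp_comp (h.memLp hK t)).add (h.memLp_noise hK.continuous t) using 1
      exact funext fun ω => (add_sub_cancel _ _).symm
    rw [funext (h.update t)]
    exact (h.memLp hK t).sub ((hg.clm_apply_of_norm_le
      ((h.stronglyMeasurable_precond t).mono (ℱ.le t)).aestronglyMeasurable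
      (h.norm_precond_le t)).const_smul η)

theorem mul_integral_norm_sq_le [IsProbabilityMeasure μ]
    (h : IsPreconditionedSGD μ ℱ f η κ σ θ g P) (hf : Differentiable ℝ f) {K : ℝ≥0}
    (hK : LipschitzWith K (gradient f)) {c : ℝ} (hc : ∀ x, c ≤ f x) (hη : 0 ≤ η)
    (hKηκ : K * η * κ ≤ 1) (t : ℕ) :
    η * ∫ ω, ‖P t ω (gradient f (θ t ω))‖ ^ 2 ∂μ
      ≤ 2 * κ * (∫ ω, f (θ t ω) ∂μ - ∫ ω, f (θ (t + 1) ω) ∂μ) + K * η ^ 2 * κ ^ 3 * σ ^ 2 := by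
  have hFm : StronglyMeasurable[ℱ t] (fun ω => gradient f (θ t ω)) :=
    hK.continuous.comp_stronglyMeasurable (h.stronglyMeasurable t)
  have hNmean := condExp_sub_ae_eq_zero (ℱ.le t) (h.integrable_grad t) hFm
    ((hK.memLp_comp (h.memLp hK t)).integrable one_le_two) (h.condExp_grad t)
  refine (mul_integral_norm_sq_preconditioned_gradient_le (ℱ.le t) hf hK hc
    (h.stronglyMeasurable t) (h.memLp hK t) (h.memLp hK (t + 1)) (h.stronglyMeasurable_precond t)
    (h.isSymmetric_precond t) (h.inner_precond_self_nonneg t) (h.norm_precond_le t) (h.update t)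
    (h.memLp_noise hK.continuous t) hNmean hη hKηκ).trans ?_
  have hκ := h.nonneg_of_isProbabilityMeasure
  exact add_le_add le_rfl (mul_le_mul_of_nonneg_left
    (integral_le_of_condExp_le (ℱ.le t) (h.condExp_noise_sq_le t)) (by positivity))

theorem average_integral_norm_sq_le [IsProbabilityMeasure μ]
    (h : IsPreconditionedSGD μ ℱ f η κ σ θ g P) (hf : Differentiable ℝ f) {K : ℝ≥0}
    (hK : LipschitzWith K (gradient f)) {c : ℝ} (hc : ∀ x, c ≤ f x) (hη : 0 < η)
    (hKηκ : K * η * κ ≤ 1) {T : ℕ} (hT : 0 < T) :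
    1 / (T : ℝ) * ∑ t ∈ Finset.range T, ∫ ω, ‖P t ω (gradient f (θ t ω))‖ ^ 2 ∂μ
      ≤ 2 * κ * (∫ ω, f (θ 0 ω) ∂μ - c) / (η * T) + K * η * κ ^ 3 * σ ^ 2 := by
  have hκ := h.nonneg_of_isProbabilityMeasure
  have hlow : ∀ t, c ≤ ∫ ω, f (θ t ω) ∂μ := fun t => by
    simpa using integral_mono (integrable_const c)
      (integrable_comp_of_lipschitzWith_gradient hf hK hc (h.memLp hK t)) fun ω => hc _
  convert average_le_of_mul_le_sub_succ hη (by positivity)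
    (h.mul_integral_norm_sq_le hf hK hc hη.le hKηκ) hlow hT using 2
  field_simp

end IsPreconditionedSGD

end PreconditionedSGD

/-- average preconditioned-gradient-norm bound for FIRE.
Under the same assumptions, for every `T ≥ 1`,
`(1/T) Σ_{t<T} E[‖(I + λ I_G^(t)) ∇𝓛(θ^(t))‖²]
  ≤ (1+λG)² (2(𝓛(θ^(0)) − 𝓛⋆)/(ηT) + ηL(1+λG)²σ²)`. -/
theorem fire_average_preconditioned_gradient_bound
    {d : ℕ} {Ω : Type*} {m0 : MeasurableSpace Ω}
    (μ : Measure Ω) [IsProbabilityMeasure μ] (ℱ : Filtration ℕ m0)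
    (𝓛 : EuclideanSpace ℝ (Fin d) → ℝ) (L Lstar : ℝ) (hL : 0 < L)
    (hdiff : Differentiable ℝ 𝓛)
    (hsmooth : ∀ a b, ‖gradient 𝓛 a - gradient 𝓛 b‖ ≤ L * ‖a - b‖)
    (hbdd : ∀ p, Lstar ≤ 𝓛 p)
    (η lam G σ : ℝ) (hlam : 0 ≤ lam) (hG : 0 ≤ G)
    (hη : 0 < η) (hη' : η ≤ 1 / (L * (1 + lam * G) ^ 2))
    (θ g : ℕ → Ω → EuclideanSpace ℝ (Fin d))
    (IG : ℕ → Ω → (EuclideanSpace ℝ (Fin d) →L[ℝ] EuclideanSpace ℝ (Fin d)))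
    (θ0 : EuclideanSpace ℝ (Fin d)) (hθ0 : θ 0 = fun _ => θ0)
    (hupdate : ∀ t ω, θ (t + 1) ω = θ t ω - η • (g t ω + lam • (IG t ω) (g t ω)))
    (hg_meas : ∀ t, StronglyMeasurable[ℱ (t + 1)] (g t))
    (hg_int : ∀ t, Integrable (g t) μ)
    (hmean : ∀ t, μ[g t | ℱ t] =ᵐ[μ] fun ω => gradient 𝓛 (θ t ω))
    (hvar_int : ∀ t, Integrable (fun ω => ‖g t ω - gradient 𝓛 (θ t ω)‖ ^ 2) μ)
    (hvar : ∀ t, μ[fun ω => ‖g t ω - gradient 𝓛 (θ t ω)‖ ^ 2 | ℱ t]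
      ≤ᵐ[μ] fun _ => σ ^ 2)
    (hIG_meas : ∀ t, StronglyMeasurable[ℱ t] (IG t))
    (hIG_symm : ∀ t ω v w, ⟪(IG t ω) v, w⟫ = ⟪v, (IG t ω) w⟫)
    (hIG_psd : ∀ t ω v, 0 ≤ ⟪(IG t ω) v, v⟫)
    (hIG_norm : ∀ t ω, ‖IG t ω‖ ≤ G) :
    ∀ T : ℕ, 1 ≤ T →
      (1 / (T : ℝ)) * ∑ t ∈ Finset.range T,
          ∫ ω, ‖gradient 𝓛 (θ t ω) + lam • (IG t ω) (gradient 𝓛 (θ t ω))‖ ^ 2 ∂μ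
        ≤ (1 + lam * G) ^ 2
          * (2 * (𝓛 θ0 - Lstar) / (η * T)
              + η * L * (1 + lam * G) ^ 2 * σ ^ 2) := by
  intro T hT
  lift L to ℝ≥0 using hL.le
  set κ := 1 + lam * G
  have hκ : 1 ≤ κ := le_add_of_nonneg_right (mul_nonneg hlam hG)
  have hLηκ : (L : ℝ) * η * κ ≤ 1 := by
    rw [le_div_iff₀ (by positivity)] at hη'
    nlinarith [mul_le_mul_of_nonneg_left hκ (by positivity : (0 : ℝ) ≤ L * η * κ)]
  have hsgd : IsPreconditionedSGD μ ℱ 𝓛 η κ σ θ g fun t ω => 1 + lam • IG t ω :=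
    { stronglyMeasurable_init := hθ0 ▸ stronglyMeasurable_const
      memLp_init := hθ0 ▸ memLp_const θ0
      update := hupdate
      stronglyMeasurable_grad := hg_meas
      integrable_grad := hg_int
      condExp_grad := hmean
      integrable_noise_sq := hvar_int
      condExp_noise_sq_le := hvar
      stronglyMeasurable_precond := fun t =>
        stronglyMeasurable_const.add ((hIG_meas t).const_smul lam)
      isSymmetric_precond := fun t ω => isSymmetric_one_add_smul (hIG_symm t ω) lam
      inner_precond_self_nonneg := fun t ω =>
        inner_one_add_smul_apply_self_nonneg (hIG_psd t ω) hlam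
      norm_precond_le := fun t ω => norm_one_add_smul_le hlam (hIG_norm t ω) }
  have hgrad : LipschitzWith L (gradient 𝓛) :=
    LipschitzWith.of_dist_le_mul fun a b => by simpa only [dist_eq_norm] using hsmooth a b
  have hbound := hsgd.average_integral_norm_sq_le hdiff hgrad hbdd hη hLηκ hT
  rw [hθ0, integral_const, probReal_univ, one_smul] at hbound
  refine hbound.trans ?_
  have hA : 0 ≤ 2 * (𝓛 θ0 - Lstar) / (η * T) := div_nonneg (by linarith [hbdd θ0]) (by positivity)
  have hB : 0 ≤ η * L * σ ^ 2 := by positivity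
  calc 2 * κ * (𝓛 θ0 - Lstar) / (η * T) + L * η * κ ^ 3 * σ ^ 2
      = κ * (2 * (𝓛 θ0 - Lstar) / (η * T)) + κ ^ 3 * (η * L * σ ^ 2) := by ring
    _ ≤ κ ^ 2 * (2 * (𝓛 θ0 - Lstar) / (η * T)) + κ ^ 4 * (η * L * σ ^ 2) :=
      add_le_add (mul_le_mul_of_nonneg_right (le_self_pow₀ hκ two_ne_zero) hA)
        (mul_le_mul_of_nonneg_right (pow_le_pow_right₀ hκ (by norm_num)) hB)
    _ = _ := by ring
end
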